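/- Let G be an α_1-metric graph and v a vertex with locality 2 (i.e., no neighbor of v has smaller eccentricity, but some vertex at distance 2 does). Then e(v) ≤ rad(G)+2; moreover, if e(v)=rad(G)+2 then diam(G)=2·rad(G). -/

import Mathlib

/-
Write k = e(v) and suppose every distance in G is at most 2k - 5. Start from the vertex x with
d(v,x) = 2 and e(x) < k. For such a vertex y, a common neighbour m of v and y has e(m) ≥ k, and the
α₁-property forces a vertex s with d(v,s) = d(m,s) = k and d(y,s) = k - 1. The α₁-property, in the
form of the interval lemma, then yields a neighbour y' of y towards s with d(v,y') = 2, and twice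
more it shows e(y') < k and that every vertex at distance k from v and k - 2 from y stays at
distance k - 2 from y'. Since s joins this set, it grows strictly along the walk y, y', …, which
is impossible in a finite graph. So some two vertices are at distance at least 2k - 4, while every
distance, and hence diam(G), is at most 2 rad(G).
-/

open SimpleGraph

variable {V : Type*}

/-- `Itv G u v x` means `x` lies on a shortest `(u,v)`-path, i.e. `x ∈ I(u,v)`. -/
def Itv (G : SimpleGraph V) (u v x : V) : Prop :=
  G.dist u x + G.dist x v = G.dist u v

/-- `G` is an `α_i`-metric graph. -/
def AlphaI (G : SimpleGraph V) (i : ℕ) : Prop :=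
  ∀ u v w x : V, Itv G u w v → Itv G v x w → G.Adj v w →
    G.dist u v + G.dist v x ≤ G.dist u x + i

/-- Eccentricity of a vertex. -/
noncomputable def ecc (G : SimpleGraph V) [Fintype V] (v : V) : ℕ :=
  Finset.univ.sup (fun u => G.dist v u)

/-- Radius of the graph. -/
noncomputable def grad (G : SimpleGraph V) [Fintype V] [Nonempty V] : ℕ :=
  Finset.univ.inf' Finset.univ_nonempty (fun v => ecc G v)

/-- Diameter of the graph. -/
noncomputable def gdiam (G : SimpleGraph V) [Fintype V] : ℕ :=
  Finset.univ.sup (fun v => ecc G v)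

section Metric

variable {G : SimpleGraph V}

theorem SimpleGraph.Connected.exists_adj_dist_eq (hG : G.Connected) {u y : V} {n : ℕ}
    (h : G.dist u y = n + 1) : ∃ w, G.Adj u w ∧ G.dist w y = n := by
  obtain ⟨p, hp⟩ := hG.exists_walk_length_eq_dist u y
  cases p with
  | nil => simp at h
  | @cons _ w _ huw q =>
    have hq := G.dist_le q
    have := hG.dist_triangle (u := u) (v := w) (w := y)
    rw [Walk.length_cons] at hp
    rw [dist_eq_one_iff_adj.2 huw] at this
    exact ⟨w, huw, by omega⟩

theorem AlphaI.dist_add_dist_le (hα : AlphaI G 1) {a b c e : V} (hbc : G.Adj b c)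
    (habc : G.dist a b + G.dist b c = G.dist a c) (hbce : G.dist b c + G.dist c e = G.dist b e) :
    G.dist a b + G.dist b e ≤ G.dist a e + 1 :=
  hα a b c e habc hbce hbc

end Metric

section Eccentricity

variable [Fintype V] (G : SimpleGraph V)

theorem dist_le_ecc (v u : V) : G.dist v u ≤ ecc G v :=
  Finset.le_sup (f := fun u => G.dist v u) (Finset.mem_univ u)

theorem exists_dist_eq_ecc (v : V) : ∃ u, G.dist v u = ecc G v := by
  obtain ⟨u, -, hu⟩ := Finset.exists_mem_eq_sup Finset.univ ⟨v, Finset.mem_univ v⟩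
    (fun u => G.dist v u)
  exact ⟨u, hu.symm⟩

theorem ecc_lt_iff {v : V} {k : ℕ} (hk : 0 < k) : ecc G v < k ↔ ∀ u, G.dist v u < k := by
  simp [ecc, Finset.sup_lt_iff hk]

theorem ecc_le_gdiam (v : V) : ecc G v ≤ gdiam G :=
  Finset.le_sup (f := fun v => ecc G v) (Finset.mem_univ v)

variable [Nonempty V]

theorem exists_ecc_eq_grad : ∃ c, ecc G c = grad G := by
  obtain ⟨c, -, hc⟩ := Finset.exists_mem_eq_inf' Finset.univ_nonempty (fun v => ecc G v)
  exact ⟨c, hc.symm⟩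

variable {G}

theorem dist_le_two_mul_grad (hG : G.Connected) (a b : V) : G.dist a b ≤ 2 * grad G := by
  obtain ⟨c, hc⟩ := exists_ecc_eq_grad G
  have := hG.dist_triangle (u := a) (v := c) (w := b)
  have := G.dist_comm (u := a) (v := c) ▸ dist_le_ecc G c a
  have := dist_le_ecc G c b
  omega

theorem gdiam_le_two_mul_grad (hG : G.Connected) : gdiam G ≤ 2 * grad G :=
  Finset.sup_le fun _ _ => Finset.sup_le fun _ _ => dist_le_two_mul_grad hG _ _

end Eccentricity

section AlphaOne

variable {G : SimpleGraph V}

theorem AlphaI.exists_adj_closer_to_both (hG : G.Connected) (hα : AlphaI G 1)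
    {u x v y : V} {A B : ℕ} (hB : 2 ≤ B) (hxv : G.Adj x v) (hux : G.dist u x = A)
    (huv : G.dist u v = A + 1) (hvy : G.dist v y = B) (hxy : G.dist x y = B + 1)
    (huy : G.dist u y = A + B) :
    ∃ y', G.Adj y y' ∧ G.dist v y' + 1 = B ∧ G.dist u y' + 1 = A + B := by
  have tri : ∀ a b c, G.dist a c ≤ G.dist a b + G.dist b c := fun _ _ _ => hG.dist_triangle
  obtain ⟨y', hyy', hy'v⟩ := hG.exists_adj_dist_eq (n := B - 1)
    (show G.dist y v = B - 1 + 1 by rw [dist_comm]; omega)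
  obtain ⟨e, hye, heu⟩ := hG.exists_adj_dist_eq (n := A + B - 1)
    (show G.dist y u = A + B - 1 + 1 by rw [dist_comm]; omega)
  have hxv1 := dist_eq_one_iff_adj.2 hxv
  have hyy'1 := dist_eq_one_iff_adj.2 hyy'
  have hye1 := dist_eq_one_iff_adj.2 hye
  have := tri u v y'; have := tri u y' y; have := tri x v y'; have := tri x y' y; have := tri y' y e
  have := tri v e y; have := tri v y e; have := tri x v e; have := tri x e y
  have hxy' : G.dist x y' = B := by grind [SimpleGraph.dist_comm]
  by_cases hy' : G.dist u y' + 1 = A + B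
  · exact ⟨y', hyy', by grind [SimpleGraph.dist_comm], hy'⟩
  by_cases he : G.dist v e + 1 = B
  · exact ⟨e, hye, he, by grind [SimpleGraph.dist_comm]⟩
  have hve : G.dist v e = B := by
    have := hα.dist_add_dist_le hye (a := v) (e := u)
    grind [SimpleGraph.dist_comm]
  have hxe : G.dist x e = B := by
    have := hα.dist_add_dist_le hxv (a := u) (e := e)
    have := hα.dist_add_dist_le hxv (a := e) (e := y)
    grind [SimpleGraph.dist_comm]
  have hy'e : 0 < G.dist y' e := hG.pos_dist_of_ne (by rintro rfl; grind [SimpleGraph.dist_comm])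
  have hy'e1 : G.dist y' e ≠ 1 := fun h => by
    have := hα.dist_add_dist_le (dist_eq_one_iff_adj.1 h) (a := v) (e := u)
    grind [SimpleGraph.dist_comm]
  have := hα.dist_add_dist_le hyy' (a := e) (e := x)
  grind [SimpleGraph.dist_comm]

theorem AlphaI.exists_adj_toward_dist_eq_two (hG : G.Connected) (hα : AlphaI G 1)
    {u p q : V} (hup : G.dist u p = 1) (hpq : G.Adj p q) (huq : G.dist u q = 2) {B : ℕ}
    (hB : 1 ≤ B) : ∀ {y : V}, G.dist q y = B → G.dist p y = B + 1 → G.dist u y = B + 1 →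
      ∃ q', G.Adj q q' ∧ G.dist q' y + 1 = B ∧ G.dist u q' = 2 := by
  induction B, hB using Nat.le_induction with
  | base =>
    intro y hqy _ huy
    exact ⟨y, dist_eq_one_iff_adj.1 hqy, by simp, huy⟩
  | succ B hB ih =>
    intro y hqy hpy huy
    obtain ⟨y₁, hyy₁, hqy₁, huy₁⟩ :=
      hα.exists_adj_closer_to_both hG (by omega) hpq hup huq hqy hpy (by omega)
    have := hG.dist_triangle (u := p) (v := q) (w := y₁)
    have := hG.dist_triangle (u := p) (v := y₁) (w := y)
    have hpy₁ : G.dist p y₁ = B + 1 := by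
      rw [dist_eq_one_iff_adj.2 hpq, dist_eq_one_iff_adj.2 hyy₁.symm] at *
      omega
    obtain ⟨q', hqq', hq'y₁, huq'⟩ := ih (by omega) hpy₁ (by omega)
    have := hG.dist_triangle (u := q') (v := y₁) (w := y)
    have := hG.dist_triangle (u := q) (v := q') (w := y)
    rw [dist_eq_one_iff_adj.2 hqq', dist_eq_one_iff_adj.2 hyy₁.symm] at *
    exact ⟨q', hqq', by omega, huq'⟩

end AlphaOne

section LocalityTwo

variable [Fintype V]

noncomputable def farPoints (G : SimpleGraph V) (v : V) (k : ℕ) (y : V) : Finset V :=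
  {s | G.dist v s = k ∧ G.dist y s + 2 = k}

variable {G : SimpleGraph V}

theorem AlphaI.ecc_lt_of_adj (hG : G.Connected) (hα : AlphaI G 1) {k : ℕ}
    (hlong : ∀ a b, G.dist a b + 4 < 2 * k) {y y' s : V} (hy : ecc G y < k) (hyy' : G.Adj y y')
    (hys : G.dist y s + 1 = k) (hy's : G.dist y' s + 2 = k) : ecc G y' < k := by
  have hk : 0 < k := by omega
  rw [ecc_lt_iff G hk] at hy ⊢
  intro t
  by_contra! hy't
  have := hy t
  have := hG.dist_triangle (u := y') (v := y) (w := t)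
  have hyy'1 := dist_eq_one_iff_adj.2 hyy'
  have := hα.dist_add_dist_le hyy' (a := t) (e := s)
  have := hlong t s
  grind [SimpleGraph.dist_comm]

theorem AlphaI.farPoints_subset_of_adj (hG : G.Connected) (hα : AlphaI G 1) {v : V} {k : ℕ}
    (hlong : ∀ a b, G.dist a b + 4 < 2 * k) {y y' s : V} (hy' : G.dist v y' = 2)
    (hyy' : G.Adj y y') (hys : G.dist y s + 1 = k) (hy's : G.dist y' s + 2 = k) :
    farPoints G v k y ⊆ farPoints G v k y' := by
  intro t
  simp only [farPoints, Finset.mem_filter_univ]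
  rintro ⟨hvt, hyt⟩
  refine ⟨hvt, ?_⟩
  have := hG.dist_triangle (u := v) (v := y') (w := t)
  have := hG.dist_triangle (u := y') (v := y) (w := t)
  have hyy'1 := dist_eq_one_iff_adj.2 hyy'
  have := hα.dist_add_dist_le hyy' (a := t) (e := s)
  have := hlong t s
  grind [SimpleGraph.dist_comm]

theorem AlphaI.exists_adj_farPoints_ssubset (hG : G.Connected) (hα : AlphaI G 1) {v : V}
    (hloc : ∀ w, G.Adj v w → ecc G v ≤ ecc G w)
    (hlong : ∀ a b, G.dist a b + 4 < 2 * ecc G v) {y : V} (hy : G.dist v y = 2)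
    (hey : ecc G y < ecc G v) :
    ∃ y', G.dist v y' = 2 ∧ ecc G y' < ecc G v ∧
      farPoints G v (ecc G v) y ⊂ farPoints G v (ecc G v) y' := by
  set k := ecc G v
  obtain ⟨m, hvm, hmy⟩ := hG.exists_adj_dist_eq (n := 1) hy
  obtain ⟨s, hs⟩ := exists_dist_eq_ecc G m
  have := hloc m hvm
  have := dist_le_ecc G v s
  have := dist_le_ecc G y s
  have := dist_le_ecc G v y
  have hvm1 := dist_eq_one_iff_adj.2 hvm
  have := hG.dist_triangle (u := m) (v := y) (w := s)
  have := hG.dist_triangle (u := m) (v := v) (w := s)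
  have := hα.dist_add_dist_le hvm (a := s) (e := y)
  have hvs : G.dist v s = k := by grind [SimpleGraph.dist_comm]
  have hys : G.dist y s = k - 1 := by grind [SimpleGraph.dist_comm]
  have hms : G.dist m s = k := by grind [SimpleGraph.dist_comm]
  obtain ⟨y', hyy', hy's, hvy'⟩ := hα.exists_adj_toward_dist_eq_two hG hvm1
    (dist_eq_one_iff_adj.1 hmy) hy (B := k - 1) (by omega) hys (by omega) (by omega)
  have hey' := hα.ecc_lt_of_adj hG hlong hey hyy' (s := s) (by omega) (by omega)
  refine ⟨y', hvy', hey', (Finset.ssubset_iff_of_subset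
    (hα.farPoints_subset_of_adj hG hlong hvy' hyy' (s := s) (by omega) (by omega))).2 ⟨s, ?_, ?_⟩⟩
  all_goals simp only [farPoints, Finset.mem_filter_univ]; omega

theorem AlphaI.exists_two_mul_ecc_le_dist_add_four (hG : G.Connected) (hα : AlphaI G 1)
    {v x : V} (hloc : ∀ w, G.Adj v w → ecc G v ≤ ecc G w)
    (hx : G.dist v x = 2) (hex : ecc G x < ecc G v) : ∃ a b, 2 * ecc G v ≤ G.dist a b + 4 := by
  by_contra! hlong
  obtain ⟨y, hy, hmax⟩ := Finset.exists_max_image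
    ({y | G.dist v y = 2 ∧ ecc G y < ecc G v} : Finset V)
    (fun y => (farPoints G v (ecc G v) y).card) ⟨x, by simp [hx, hex]⟩
  rw [Finset.mem_filter_univ] at hy
  obtain ⟨y', hvy', hey', hss⟩ := hα.exists_adj_farPoints_ssubset hG hloc hlong hy.1 hy.2
  exact (Finset.card_lt_card hss).not_ge (hmax y' (by simp [hvy', hey']))

end LocalityTwo

theorem stmt_15 [Fintype V] [Nonempty V] (G : SimpleGraph V) (hG : G.Connected)
    (hα : AlphaI G 1) (v : V)
    (hloc1 : ∀ w : V, G.Adj v w → ecc G v ≤ ecc G w)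
    (hloc2 : ∃ x : V, G.dist v x = 2 ∧ ecc G x < ecc G v) :
    ecc G v ≤ grad G + 2 ∧ (ecc G v = grad G + 2 → gdiam G = 2 * grad G) := by
  obtain ⟨x, hvx, hex⟩ := hloc2
  obtain ⟨a, b, hab⟩ := hα.exists_two_mul_ecc_le_dist_add_four hG hloc1 hvx hex
  have hab_le := dist_le_two_mul_grad hG a b
  refine ⟨by omega, fun hv => le_antisymm (gdiam_le_two_mul_grad hG) ?_⟩
  calc 2 * grad G ≤ G.dist a b := by omega
    _ ≤ ecc G a := dist_le_ecc G a b
    _ ≤ gdiam G := ecc_le_gdiam G a
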